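/- arXiv:2111.01021 — 3 statements merged into one kernel-verified Lean document; each statement's English description precedes it below -/
import Mathlib

section
/- Let v = (v₁, v₂) ∈ ℚ² ∖ ℤ² and let τ ∈ ℍ satisfy |q_τ| = |e^{2πiτ}| ≤ e^{−π√3}. Then |g_v(τ)| < 2.29 · |q_τ|^{−1/24}. -/
open Complex

/-- The Siegel function `g_v(τ)` for a row vector `v = (v₁, v₂) ∈ ℚ²`, given by the
infinite product
`g_v(τ) = -e^{πi v₂(v₁-1)} q_τ^{(1/2)(v₁²-v₁+1/6)} (1-q_z) ∏_{n≥1} (1-q_τⁿ q_z)(1-q_τⁿ q_z⁻¹)`,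
where `q_τ^r = e^{2πirτ}` and `q_z = e^{2πiz}` with `z = v₁τ + v₂`. -/
noncomputable def siegelFunction (v : ℚ × ℚ) (τ : ℂ) : ℂ :=
  let z : ℂ := (v.1 : ℂ) * τ + (v.2 : ℂ);
  let qz : ℂ := Complex.exp (2 * (Real.pi : ℂ) * Complex.I * z);
  let qτ : ℂ := Complex.exp (2 * (Real.pi : ℂ) * Complex.I * τ);
  (-Complex.exp ((Real.pi : ℂ) * Complex.I * (v.2 : ℂ) * ((v.1 : ℂ) - 1))) *
    Complex.exp (2 * (Real.pi : ℂ) * Complex.I *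
      ((1 / 2 : ℂ) * ((v.1 : ℂ) ^ 2 - (v.1 : ℂ) + 1 / 6)) * τ) *
    (1 - qz) *
    ∏' n : ℕ, ((1 - qτ ^ (n + 1) * qz) * (1 - qτ ^ (n + 1) * qz⁻¹))

/-!
Put `x = |q_τ|` and `s = v₁`, so that `|q_z| = x ^ s`. Bounding every factor `1 - w` of the
product by `1 + |w|` gives `|g_v(τ)| ≤ x^{1/12} · x^{(s²-s)/2} ∏_{n ≥ 0} (1 + x^{n+s}) (1 + x^{n+1-s})`.
This majorant is 1-periodic in `s`: the shift `s ↦ s + 1` moves the factor `1 + x^s` from one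
product to the other, and the Gaussian factor `x^{(s²-s)/2}` compensates. So we may take
`s ∈ [0, 1)`, where `x^{(s²-s)/2} ≤ x^{-1/8}`, `(1 + x^s)(1 + x^{1-s}) ≤ 2 (1 + x)`, and the remaining
two products are at most `exp (x / (1 - x))` each. As `x ≤ e^{-π√3} ≤ 1/32`, this is below
`2.29 · x^{-1/8}`, and `x^{1/12} · x^{-1/8} = x^{-1/24}`.
-/

theorem tprod_le_tprod_of_nonneg {ι : Type*} {f g : ι → ℝ} (hf0 : ∀ i, 0 ≤ f i)
    (hfg : ∀ i, f i ≤ g i) (hf : Multipliable f) (hg : Multipliable g) :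
    ∏' i, f i ≤ ∏' i, g i :=
  le_of_tendsto_of_tendsto' hf.hasProd hg.hasProd fun _ =>
    Finset.prod_le_prod (fun i _ => hf0 i) fun i _ => hfg i

theorem norm_tprod_le_tprod {ι E : Type*} [NormedCommRing E] [NormMulClass E] [NormOneClass E]
    {f : ι → E} {g : ι → ℝ} (hfg : ∀ i, ‖f i‖ ≤ g i) (hg1 : ∀ i, 1 ≤ g i) (hg : Multipliable g) :
    ‖∏' i, f i‖ ≤ ∏' i, g i := by
  by_cases hf : Multipliable f
  · rw [hf.norm_tprod]
    exact tprod_le_tprod_of_nonneg (fun i => norm_nonneg _) hfg hf.norm hg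
  · rw [tprod_eq_one_of_not_multipliable hf, norm_one]
    exact ge_of_tendsto' hg.hasProd fun _ => Finset.one_le_prod fun i _ => hg1 i

noncomputable def prodOneAddRpow (x s : ℝ) : ℝ := ∏' n : ℕ, (1 + x ^ ((n : ℝ) + s))

section prodOneAddRpow

variable {x : ℝ}

theorem hasSum_rpow_natCast_add (hx0 : 0 < x) (hx1 : x < 1) (s : ℝ) :
    HasSum (fun n : ℕ => x ^ ((n : ℝ) + s)) (x ^ s / (1 - x)) := by
  simp_rw [Real.rpow_add hx0, Real.rpow_natCast, div_eq_mul_inv, mul_comm (x ^ s)]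
  exact (hasSum_geometric_of_lt_one hx0.le hx1).mul_right _

theorem multipliable_one_add_rpow (hx0 : 0 < x) (hx1 : x < 1) (s : ℝ) :
    Multipliable fun n : ℕ => 1 + x ^ ((n : ℝ) + s) :=
  Real.multipliable_one_add_of_summable (hasSum_rpow_natCast_add hx0 hx1 s).summable

theorem prodOneAddRpow_nonneg (hx0 : 0 ≤ x) (s : ℝ) : 0 ≤ prodOneAddRpow x s :=
  tprod_nonneg fun _ => by positivity

theorem prodOneAddRpow_eq_mul_add_one (hx0 : 0 < x) (hx1 : x < 1) (s : ℝ) :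
    prodOneAddRpow x s = (1 + x ^ s) * prodOneAddRpow x (s + 1) := by
  have hshift : (fun n : ℕ => 1 + x ^ (((n + 1 : ℕ) : ℝ) + s)) =
      fun n : ℕ => 1 + x ^ ((n : ℝ) + (s + 1)) := by
    funext n
    push_cast
    ring_nf
  rw [prodOneAddRpow, tprod_eq_zero_mul' (hshift ▸ multipliable_one_add_rpow hx0 hx1 (s + 1)),
    hshift, prodOneAddRpow, Nat.cast_zero, zero_add]

theorem prodOneAddRpow_le_exp (hx0 : 0 < x) (hx1 : x < 1) (s : ℝ) :
    prodOneAddRpow x s ≤ Real.exp (x ^ s / (1 - x)) := by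
  have hexp := (hasSum_rpow_natCast_add hx0 hx1 s).rexp
  rw [← hexp.tprod_eq]
  refine tprod_le_tprod_of_nonneg (fun n => by positivity) (fun n => ?_)
    (multipliable_one_add_rpow hx0 hx1 s) hexp.multipliable
  rw [add_comm]
  exact Real.add_one_le_exp _

theorem prodOneAddRpow_le_exp_of_one_le (hx0 : 0 < x) (hx1 : x < 1) {s : ℝ} (hs : 1 ≤ s) :
    prodOneAddRpow x s ≤ Real.exp (x / (1 - x)) := by
  refine (prodOneAddRpow_le_exp hx0 hx1 s).trans (Real.exp_le_exp.2 ?_)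
  gcongr
  simpa using Real.rpow_le_rpow_of_exponent_ge hx0 hx1.le hs

end prodOneAddRpow

noncomputable def siegelMajorant (x s : ℝ) : ℝ :=
  x ^ ((s ^ 2 - s) / 2) * (prodOneAddRpow x s * prodOneAddRpow x (1 - s))

section siegelMajorant

variable {x : ℝ}

theorem siegelMajorant_periodic (hx0 : 0 < x) (hx1 : x < 1) :
    Function.Periodic (siegelMajorant x) 1 := by
  intro s
  have hs := prodOneAddRpow_eq_mul_add_one hx0 hx1 s
  have hs' := prodOneAddRpow_eq_mul_add_one hx0 hx1 (-s)
  rw [neg_add_eq_sub] at hs'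
  have hpow : x ^ (((s + 1) ^ 2 - (s + 1)) / 2) * x ^ (-s) = x ^ ((s ^ 2 - s) / 2) := by
    rw [← Real.rpow_add hx0]; ring_nf
  have hpow' : x ^ (((s + 1) ^ 2 - (s + 1)) / 2) = x ^ ((s ^ 2 - s) / 2) * x ^ s := by
    rw [← Real.rpow_add hx0]; ring_nf
  rw [siegelMajorant, siegelMajorant, hs, show (1 : ℝ) - (s + 1) = -s by ring, hs']
  linear_combination (prodOneAddRpow x (s + 1) * prodOneAddRpow x (1 - s)) *
    (hpow + hpow')

theorem one_add_rpow_mul_one_add_rpow_one_sub_le (hx0 : 0 < x) (hx1 : x ≤ 1) {t : ℝ}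
    (ht0 : 0 ≤ t) (ht1 : t ≤ 1) : (1 + x ^ t) * (1 + x ^ (1 - t)) ≤ 2 * (1 + x) := by
  have ha : x ^ t ≤ 1 := Real.rpow_le_one hx0.le hx1 ht0
  have hb : x ^ (1 - t) ≤ 1 := Real.rpow_le_one hx0.le hx1 (by linarith)
  have hab : x ^ t * x ^ (1 - t) = x := by rw [← Real.rpow_add hx0, add_sub_cancel, Real.rpow_one]
  nlinarith [mul_nonneg (sub_nonneg.2 ha) (sub_nonneg.2 hb)]

theorem siegelMajorant_le (hx0 : 0 < x) (hx1 : x < 1) {t : ℝ} (ht0 : 0 ≤ t) (ht1 : t ≤ 1) :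
    siegelMajorant x t ≤ x ^ (-(1 / 8) : ℝ) * (2 * (1 + x) * Real.exp (x / (1 - x)) ^ 2) := by
  rw [siegelMajorant, prodOneAddRpow_eq_mul_add_one hx0 hx1 t,
    prodOneAddRpow_eq_mul_add_one hx0 hx1 (1 - t)]
  have hgauss : x ^ ((t ^ 2 - t) / 2) ≤ x ^ (-(1 / 8) : ℝ) :=
    Real.rpow_le_rpow_of_exponent_ge hx0 hx1.le (by nlinarith [sq_nonneg (t - 1 / 2)])
  have hprod : prodOneAddRpow x (t + 1) * prodOneAddRpow x (1 - t + 1) ≤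
      Real.exp (x / (1 - x)) ^ 2 := by
    rw [sq]
    exact mul_le_mul (prodOneAddRpow_le_exp_of_one_le hx0 hx1 (by linarith))
      (prodOneAddRpow_le_exp_of_one_le hx0 hx1 (by linarith))
      (prodOneAddRpow_nonneg hx0.le _) (Real.exp_pos _).le
  have hprod0 : 0 ≤ prodOneAddRpow x (t + 1) * prodOneAddRpow x (1 - t + 1) :=
    mul_nonneg (prodOneAddRpow_nonneg hx0.le _) (prodOneAddRpow_nonneg hx0.le _)
  calc _ = x ^ ((t ^ 2 - t) / 2) * ((1 + x ^ t) * (1 + x ^ (1 - t)) *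
        (prodOneAddRpow x (t + 1) * prodOneAddRpow x (1 - t + 1))) := by ring
    _ ≤ _ := mul_le_mul hgauss
        (mul_le_mul (one_add_rpow_mul_one_add_rpow_one_sub_le hx0 hx1.le ht0 ht1) hprod
          hprod0 (by positivity))
        (mul_nonneg (by positivity) hprod0) (by positivity)

theorem two_mul_one_add_mul_exp_sq_lt (hx : x ≤ 1 / 32) :
    2 * (1 + x) * Real.exp (x / (1 - x)) ^ 2 < 2.29 := by
  have hy : x / (1 - x) ≤ 1 / 31 := by rw [div_le_iff₀ (by linarith)]; linarith
  have hexp : Real.exp (x / (1 - x)) ^ 2 ≤ 31 / 29 :=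
    calc Real.exp (x / (1 - x)) ^ 2 = Real.exp (2 * (x / (1 - x))) := by
          rw [sq, ← Real.exp_add, two_mul]
      _ ≤ Real.exp (2 / 31) := Real.exp_le_exp.2 (by linarith)
      _ ≤ 1 / (1 - 2 / 31) := Real.exp_bound_div_one_sub_of_interval (by norm_num) (by norm_num)
      _ = 31 / 29 := by norm_num
  nlinarith [Real.exp_pos (x / (1 - x))]

end siegelMajorant

theorem norm_exp_two_pi_I_mul (w : ℂ) :
    ‖cexp (2 * (Real.pi : ℂ) * I * w)‖ = Real.exp (-(2 * Real.pi * w.im)) := by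
  simp [Complex.norm_exp]

theorem norm_exp_two_pi_I_mul_ofReal_mul_add (a b : ℝ) (τ : ℂ) :
    ‖cexp (2 * (Real.pi : ℂ) * I * (a * τ + b))‖ = ‖cexp (2 * (Real.pi : ℂ) * I * τ)‖ ^ a := by
  rw [norm_exp_two_pi_I_mul, norm_exp_two_pi_I_mul, ← Real.exp_mul]
  simp only [add_im, mul_im, ofReal_re, ofReal_im, zero_mul, add_zero]
  ring_nf

theorem norm_one_sub_pow_succ_mul_le {q w : ℂ} {a : ℝ} (hq : q ≠ 0) (hw : ‖w‖ = ‖q‖ ^ a)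
    (n : ℕ) : ‖1 - q ^ (n + 1) * w‖ ≤ 1 + ‖q‖ ^ ((n : ℝ) + (1 + a)) := by
  calc ‖1 - q ^ (n + 1) * w‖ ≤ 1 + ‖q ^ (n + 1) * w‖ := by
        simpa using norm_sub_le (1 : ℂ) (q ^ (n + 1) * w)
    _ = 1 + ‖q‖ ^ ((n : ℝ) + (1 + a)) := by
        rw [norm_mul, norm_pow, hw, ← Real.rpow_natCast, ← Real.rpow_add (norm_pos_iff.2 hq)]
        push_cast
        ring_nf

theorem norm_tprod_one_sub_mul_one_sub_inv_le {q w : ℂ} {a : ℝ} (hq0 : q ≠ 0) (hq1 : ‖q‖ < 1)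
    (hw : ‖w‖ = ‖q‖ ^ a) :
    ‖∏' n : ℕ, (1 - q ^ (n + 1) * w) * (1 - q ^ (n + 1) * w⁻¹)‖ ≤
      prodOneAddRpow ‖q‖ (1 + a) * prodOneAddRpow ‖q‖ (1 - a) := by
  have hx0 : 0 < ‖q‖ := norm_pos_iff.2 hq0
  have hw' : ‖w⁻¹‖ = ‖q‖ ^ (-a) := by rw [norm_inv, hw, Real.rpow_neg hx0.le]
  have hmul₁ := multipliable_one_add_rpow hx0 hq1 (1 + a)
  have hmul₂ := multipliable_one_add_rpow hx0 hq1 (1 - a)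
  rw [prodOneAddRpow, prodOneAddRpow, ← hmul₁.tprod_mul hmul₂]
  refine norm_tprod_le_tprod (fun n => ?_) (fun n => ?_) (hmul₁.mul hmul₂)
  · have h₂ := norm_one_sub_pow_succ_mul_le hq0 hw' n
    rw [← sub_eq_add_neg] at h₂
    rw [norm_mul]
    exact mul_le_mul (norm_one_sub_pow_succ_mul_le hq0 hw n) h₂ (norm_nonneg _) (by positivity)
  · exact one_le_mul_of_one_le_of_one_le (le_add_of_nonneg_right (by positivity))
      (le_add_of_nonneg_right (by positivity))

theorem norm_siegelFunction_le (v : ℚ × ℚ) (τ : ℂ)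
    (hq : ‖cexp (2 * (Real.pi : ℂ) * I * τ)‖ < 1) :
    ‖siegelFunction v τ‖ ≤ ‖cexp (2 * (Real.pi : ℂ) * I * τ)‖ ^ (1 / 12 : ℝ) *
      siegelMajorant ‖cexp (2 * (Real.pi : ℂ) * I * τ)‖ v.1 := by
  simp only [siegelFunction, norm_mul]
  set q := cexp (2 * (Real.pi : ℂ) * I * τ)
  set w := cexp (2 * (Real.pi : ℂ) * I * ((v.1 : ℂ) * τ + (v.2 : ℂ)))
  set a : ℝ := (v.1 : ℝ)
  have hq0 : q ≠ 0 := Complex.exp_ne_zero _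
  have hx0 : 0 < ‖q‖ := norm_pos_iff.2 hq0
  have hphase : ‖-cexp ((Real.pi : ℂ) * I * (v.2 : ℂ) * ((v.1 : ℂ) - 1))‖ = 1 := by
    rw [norm_neg, Complex.norm_exp]
    simp
  have hgauss : ‖cexp (2 * (Real.pi : ℂ) * I * ((1 / 2 : ℂ) * ((v.1 : ℂ) ^ 2 - v.1 + 1 / 6)) * τ)‖
      = ‖q‖ ^ ((a ^ 2 - a + 1 / 6) / 2) := by
    rw [← norm_exp_two_pi_I_mul_ofReal_mul_add _ 0 τ]
    congr 2
    push_cast [a]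
    ring
  have hw : ‖w‖ = ‖q‖ ^ a := by
    rw [← norm_exp_two_pi_I_mul_ofReal_mul_add a v.2 τ]
    push_cast [a]
    rfl
  have hfirst : ‖1 - w‖ ≤ 1 + ‖q‖ ^ a := by
    simpa [hw] using norm_sub_le (1 : ℂ) w
  have hprod := norm_tprod_one_sub_mul_one_sub_inv_le hq0 hq hw
  have hsplit : ‖q‖ ^ ((a ^ 2 - a + 1 / 6) / 2) = ‖q‖ ^ (1 / 12 : ℝ) * ‖q‖ ^ ((a ^ 2 - a) / 2) := by
    rw [← Real.rpow_add hx0]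
    ring_nf
  rw [hphase, hgauss, one_mul]
  calc _ ≤ ‖q‖ ^ ((a ^ 2 - a + 1 / 6) / 2) * (1 + ‖q‖ ^ a) *
        (prodOneAddRpow ‖q‖ (1 + a) * prodOneAddRpow ‖q‖ (1 - a)) := by gcongr
    _ = ‖q‖ ^ (1 / 12 : ℝ) * siegelMajorant ‖q‖ a := by
      rw [siegelMajorant, prodOneAddRpow_eq_mul_add_one hx0 hq a, hsplit, add_comm 1 a]
      ring

theorem exp_neg_pi_mul_sqrt_three_le : Real.exp (-Real.pi * Real.sqrt 3) ≤ 1 / 32 := by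
  have hsqrt : 5 / 3 ≤ Real.sqrt 3 := Real.le_sqrt_of_sq_le (by norm_num)
  have he : 2 ≤ Real.exp 1 := by linarith [Real.add_one_le_exp 1]
  calc Real.exp (-Real.pi * Real.sqrt 3) ≤ Real.exp (-5) :=
        Real.exp_le_exp.2 (by nlinarith [Real.pi_gt_three])
    _ = (Real.exp 1 ^ 5)⁻¹ := by rw [Real.exp_neg, ← Real.exp_nat_mul]; norm_num
    _ ≤ 1 / 32 := by rw [one_div]; gcongr; linarith [pow_le_pow_left₀ (by norm_num) he 5]

theorem siegel_abs_lt_general (v : ℚ × ℚ) (τ : ℂ)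
    (hq : ‖Complex.exp (2 * (Real.pi : ℂ) * Complex.I * τ)‖ ≤
      Real.exp (-Real.pi * Real.sqrt 3)) :
    ‖siegelFunction v τ‖ <
      2.29 * ‖Complex.exp (2 * (Real.pi : ℂ) * Complex.I * τ)‖ ^ (-(1 / 24) : ℝ) := by
  set x := ‖Complex.exp (2 * (Real.pi : ℂ) * Complex.I * τ)‖
  have hx0 : 0 < x := norm_pos_iff.2 (Complex.exp_ne_zero _)
  have hx : x ≤ 1 / 32 := hq.trans exp_neg_pi_mul_sqrt_three_le
  have hx1 : x < 1 := by linarith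
  have hfract : siegelMajorant x (Int.fract (v.1 : ℝ)) = siegelMajorant x v.1 := by
    have := (siegelMajorant_periodic hx0 hx1).sub_int_mul_eq (x := (v.1 : ℝ)) ⌊(v.1 : ℝ)⌋
    rwa [mul_one, Int.self_sub_floor] at this
  calc ‖siegelFunction v τ‖ ≤ x ^ (1 / 12 : ℝ) * siegelMajorant x (Int.fract (v.1 : ℝ)) := by
        rw [hfract]; exact norm_siegelFunction_le v τ hx1
    _ ≤ x ^ (1 / 12 : ℝ) * (x ^ (-(1 / 8) : ℝ) * (2 * (1 + x) * Real.exp (x / (1 - x)) ^ 2)) := by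
        gcongr
        exact siegelMajorant_le hx0 hx1 (Int.fract_nonneg _) (Int.fract_lt_one _).le
    _ < x ^ (1 / 12 : ℝ) * (x ^ (-(1 / 8) : ℝ) * 2.29) := by
        gcongr
        exact two_mul_one_add_mul_exp_sq_lt hx
    _ = 2.29 * x ^ (-(1 / 24) : ℝ) := by
        rw [← mul_assoc, ← Real.rpow_add hx0]
        norm_num
        ring

theorem siegel_abs_lt (v : ℚ × ℚ) (hv : ¬∃ m n : ℤ, v.1 = (m : ℚ) ∧ v.2 = (n : ℚ))
    (τ : ℂ) (hτ : 0 < τ.im)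
    (hq : ‖Complex.exp (2 * (Real.pi : ℂ) * Complex.I * τ)‖ ≤
      Real.exp (-Real.pi * Real.sqrt 3)) :
    ‖siegelFunction v τ‖ <
      2.29 * ‖Complex.exp (2 * (Real.pi : ℂ) * Complex.I * τ)‖ ^ (-(1 / 24) : ℝ) :=
  siegel_abs_lt_general v τ hq
end

section
/- Let N ≥ 2 be an integer, let v = (v₁, v₂) ∈ (1/N)ℤ² ∖ ℤ², and let τ ∈ ℍ satisfy |q_τ| = |e^{2πiτ}| ≤ e^{−π√3}. Then |g_v(τ)| > 0.76 · |q_τ|^{1/12} / N. -/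
/-!
Write `q = e^{2πiτ}`, `w = e^{2πi(xτ + y)}` and `σ = e^{-π Im τ}`, so that `|q| = σ²` and
`|w| = σ^{2x}`. Taking logarithms factor by factor,
`log |g_{(x,y)}(τ)| = B₂(x)/2 · log |q| + log |1 - w| + ∑ₙ log |1 - qⁿ⁺¹ w| + ∑ₙ log |1 - qⁿ⁺¹ w⁻¹|`
with `B₂(x) = x² - x + 1/6`. Replacing `w` by `qw` or by `w⁻¹` lowers the last three terms by
`log |w| = x log |q|`, which the change of the `B₂` term makes up; so the right side is invariant
under `x ↦ x + 1` and `(x, y) ↦ (-x, -y)`, and we may assume `0 ≤ x ≤ 1/2`.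

Then `B₂(x) ≤ 1/6` gives `B₂(x)/2 · log |q| ≥ log |q| / 12`. Every `qⁿ⁺¹ w^{±1}` has modulus at
most `σⁿ⁺¹`, and `σ ≤ e^{-π√3/2} < 1/10`, so `log |1 - z| ≥ -2|z|` bounds the two sums below by
`-4/9`, and `e^{-4/9} ≥ 5/9`. Finally `|1 - w| ≥ 9/(5N)`: for `x ≥ 1/N` because
`|w| ≤ 1 - 2x(1 - σ)` by convexity of `exp`, and for `x = 0` because
`|1 - e^{2πiy}| ≥ 4 |y - round y| ≥ 4/N` by Jordan's inequality. Hence `|g_v(τ)| ≥ |q|^{1/12} / N`.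
-/

open Complex

section LogNormProduct

variable {a : ℕ → ℂ}

lemma summable_log_norm_one_sub (ha : Summable a) :
    Summable fun n => Real.log ‖1 - a n‖ := by
  have h := Complex.summable_log_one_add_of_summable ha.neg
  simpa [← sub_eq_add_neg, Complex.log_re] using (Complex.hasSum_re h.hasSum).summable

lemma norm_tprod_one_sub (ha : Summable a) (h0 : ∀ n, 1 - a n ≠ 0) :
    ‖∏' n, (1 - a n)‖ = Real.exp (∑' n, Real.log ‖1 - a n‖) := by
  have hprod : Multipliable fun n => 1 - a n := by
    simpa [← sub_eq_add_neg] using Complex.multipliable_one_add_of_summable ha.neg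
  rw [Real.rexp_tsum_eq_tprod (fun n => norm_pos_iff.2 (h0 n)) (summable_log_norm_one_sub ha),
    hprod.hasProd.norm.tprod_eq]

lemma neg_two_mul_norm_le_log_norm_one_sub {z : ℂ} (hz : ‖z‖ ≤ 1 / 2) :
    -2 * ‖z‖ ≤ Real.log ‖1 - z‖ := by
  have hsub : 1 - ‖z‖ ≤ ‖1 - z‖ := by simpa using norm_sub_norm_le (1 : ℂ) z
  have hpos : 0 < 1 - ‖z‖ := by linarith
  calc -2 * ‖z‖ ≤ 1 - (1 - ‖z‖)⁻¹ := by
        have : (1 - ‖z‖)⁻¹ ≤ 1 + 2 * ‖z‖ := by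
          rw [inv_le_iff_one_le_mul₀' hpos]; nlinarith [norm_nonneg z]
        linarith
    _ ≤ Real.log (1 - ‖z‖) := Real.one_sub_inv_le_log_of_pos hpos
    _ ≤ Real.log ‖1 - z‖ := Real.log_le_log hpos hsub

lemma neg_two_mul_div_le_tsum_log_norm_one_sub {s : ℝ} (hs : s ≤ 1 / 2)
    (ha : ∀ n, ‖a n‖ ≤ s ^ (n + 1)) :
    -2 * s / (1 - s) ≤ ∑' n, Real.log ‖1 - a n‖ := by
  have hs0 : 0 ≤ s := (norm_nonneg _).trans (by simpa using ha 0)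
  have hgeom : HasSum (fun n => -2 * s * s ^ n) (-2 * s * (1 - s)⁻¹) :=
    (hasSum_geometric_of_lt_one hs0 (by linarith)).mul_left (-2 * s)
  have hsum : Summable a :=
    Summable.of_norm_bounded ((summable_geometric_of_lt_one hs0 (by linarith)).mul_left s)
      fun n => (ha n).trans_eq (pow_succ' s n)
  rw [div_eq_mul_inv, ← hgeom.tsum_eq]
  refine Summable.tsum_le_tsum (fun n => ?_) hgeom.summable (summable_log_norm_one_sub hsum)
  have hn : s ^ (n + 1) ≤ 1 / 2 := (pow_le_of_le_one hs0 (by linarith) n.succ_ne_zero).trans hs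
  nlinarith [neg_two_mul_norm_le_log_norm_one_sub ((ha n).trans hn), ha n, pow_succ' s n]

end LogNormProduct

section ThetaProduct

variable {q w : ℂ}

/-- Factor-by-factor logarithm of `‖(1 - w) ∏ₙ (1 - qⁿ⁺¹ w)(1 - qⁿ⁺¹ w⁻¹)‖`. -/
noncomputable def logNormTheta (q w : ℂ) : ℝ :=
  Real.log ‖1 - w‖ + ∑' n : ℕ, Real.log ‖1 - q ^ (n + 1) * w‖ +
    ∑' n : ℕ, Real.log ‖1 - q ^ (n + 1) * w⁻¹‖

lemma summable_pow_succ_mul (hq : ‖q‖ < 1) (c : ℂ) : Summable fun n : ℕ => q ^ (n + 1) * c :=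
  (((summable_geometric_of_norm_lt_one hq).mul_left q).mul_right c).congr fun n => by ring

lemma norm_one_sub_mul_tprod (hq : ‖q‖ < 1) (h0 : 1 - w ≠ 0)
    (h1 : ∀ n : ℕ, 1 - q ^ (n + 1) * w ≠ 0) (h2 : ∀ n : ℕ, 1 - q ^ (n + 1) * w⁻¹ ≠ 0) :
    ‖(1 - w) * ∏' n : ℕ, ((1 - q ^ (n + 1) * w) * (1 - q ^ (n + 1) * w⁻¹))‖ =
      Real.exp (logNormTheta q w) := by
  have hm : ∀ c : ℂ, Multipliable fun n : ℕ => 1 - q ^ (n + 1) * c := fun c => by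
    simpa [← sub_eq_add_neg] using
      Complex.multipliable_one_add_of_summable (summable_pow_succ_mul hq c).neg
  rw [(hm w).tprod_mul (hm w⁻¹), norm_mul, norm_mul,
    norm_tprod_one_sub (summable_pow_succ_mul hq w) h1,
    norm_tprod_one_sub (summable_pow_succ_mul hq w⁻¹) h2, logNormTheta, Real.exp_add,
    Real.exp_add, Real.exp_log (norm_pos_iff.2 h0), mul_assoc]

lemma log_norm_one_sub_inv (w : ℂ) : Real.log ‖1 - w⁻¹‖ = Real.log ‖1 - w‖ - Real.log ‖w‖ := by
  rcases eq_or_ne w 0 with rfl | hw0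
  · simp
  rcases eq_or_ne w 1 with rfl | hw1
  · simp
  have h : 1 - w⁻¹ = -(1 - w) * w⁻¹ := by field_simp; ring
  rw [h, norm_mul, norm_neg, norm_inv, Real.log_mul (by simpa [sub_eq_zero] using hw1.symm)
    (by simpa using hw0), Real.log_inv]
  ring

lemma logNormTheta_inv (q w : ℂ) : logNormTheta q w⁻¹ = logNormTheta q w - Real.log ‖w‖ := by
  rw [logNormTheta, logNormTheta, inv_inv, log_norm_one_sub_inv]
  ring

lemma logNormTheta_mul_left (hq0 : q ≠ 0) (hq : ‖q‖ < 1) (w : ℂ) :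
    logNormTheta q (q * w) = logNormTheta q w - Real.log ‖w‖ := by
  have hA := Summable.tsum_eq_zero_add
    (summable_log_norm_one_sub (summable_pow_succ_mul hq w))
  have hB := Summable.tsum_eq_zero_add
    ((summable_nat_add_iff 1).1 (summable_log_norm_one_sub (summable_pow_succ_mul hq w⁻¹)) :
      Summable fun n : ℕ => Real.log ‖1 - q ^ n * w⁻¹‖)
  have hshift : ∀ n : ℕ, q ^ (n + 1) * (q * w)⁻¹ = q ^ n * w⁻¹ := fun n => by
    field_simp; ring
  simp only [logNormTheta, hshift, ← mul_assoc, ← pow_succ] at hA hB ⊢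
  simp only [zero_add, pow_zero, pow_one, one_mul] at hA hB
  rw [hA, hB, log_norm_one_sub_inv]
  ring

lemma logNormTheta_ge {s : ℝ} (hs : s ≤ 1 / 2) (hw : ‖w‖ ≤ 1) (hq : ‖q‖ ≤ s)
    (hqw : ‖q‖ ≤ s * ‖w‖) :
    Real.log ‖1 - w‖ - 4 * s / (1 - s) ≤ logNormTheta q w := by
  have hs0 : 0 ≤ s := (norm_nonneg q).trans hq
  have hqn : ∀ n : ℕ, ‖q‖ ^ n ≤ s ^ n := fun n => pow_le_pow_left₀ (norm_nonneg q) hq n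
  have hA := neg_two_mul_div_le_tsum_log_norm_one_sub hs (a := fun n => q ^ (n + 1) * w)
    fun n => by
      rw [norm_mul, norm_pow]
      exact (mul_le_of_le_one_right (by positivity) hw).trans (hqn (n + 1))
  have hB := neg_two_mul_div_le_tsum_log_norm_one_sub hs (a := fun n => q ^ (n + 1) * w⁻¹)
    fun n => by
      rcases eq_or_ne w 0 with rfl | hw0
      · simp [pow_nonneg hs0]
      rw [norm_mul, norm_pow, norm_inv, pow_succ, pow_succ, mul_assoc]
      refine mul_le_mul (hqn n) ?_ (by positivity) (pow_nonneg hs0 n)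
      rwa [← div_eq_mul_inv, div_le_iff₀ (norm_pos_iff.2 hw0)]
  rw [logNormTheta]
  linarith [show 4 * s / (1 - s) = -2 * (-2 * s / (1 - s)) by ring]

end ThetaProduct

namespace Siegel

open scoped Real

noncomputable def e (z : ℂ) : ℂ := exp (2 * π * I * z)

variable {x y : ℝ} {τ : ℂ}

lemma norm_e (z : ℂ) : ‖e z‖ = Real.exp (-2 * π * z.im) := by
  simp [e, Complex.norm_exp]

lemma e_ne_zero (z : ℂ) : e z ≠ 0 := Complex.exp_ne_zero _

lemma e_add (z w : ℂ) : e (z + w) = e z * e w := by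
  rw [e, e, e, mul_add, Complex.exp_add]

lemma e_neg (z : ℂ) : e (-z) = (e z)⁻¹ := by
  rw [e, e, mul_neg, Complex.exp_neg]

lemma e_pow (z : ℂ) (n : ℕ) : e z ^ n = e (n * z) := by
  rw [e, e, ← Complex.exp_nat_mul]; ring_nf

lemma e_add_intCast (z : ℂ) (n : ℤ) : e (z + n) = e z := by
  have h1 : e n = 1 := by rw [e, mul_comm, Complex.exp_int_mul_two_pi_mul_I]
  rw [e_add, h1, mul_one]

lemma im_ofReal_mul_add (x y : ℝ) (τ : ℂ) : ((x : ℂ) * τ + y).im = x * τ.im := by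
  simp

lemma log_norm_e_mul_add (x y : ℝ) (τ : ℂ) :
    Real.log ‖e (x * τ + y)‖ = -2 * π * x * τ.im := by
  rw [norm_e, Real.log_exp, im_ofReal_mul_add]; ring

lemma e_mul_add_eq_one_iff (hτ : 0 < τ.im) :
    e (x * τ + y) = 1 ↔ x = 0 ∧ ∃ n : ℤ, y = n := by
  constructor
  · intro h
    obtain ⟨n, hn⟩ := Complex.exp_eq_one_iff.1 h
    have hz : (x : ℂ) * τ + y = n := by
      have h2pi : 2 * (π : ℂ) * I ≠ 0 := by simp [Real.pi_ne_zero]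
      exact mul_left_cancel₀ h2pi (hn.trans (mul_comm _ _))
    have hx : x = 0 := by
      simpa [hτ.ne'] using congrArg Complex.im hz
    refine ⟨hx, n, ?_⟩
    simpa [hx] using congrArg Complex.re hz
  · rintro ⟨rfl, n, rfl⟩
    simpa [e] using e_add_intCast 0 n

lemma one_sub_e_ne_zero (hτ : 0 < τ.im) (h : x = 0 → ¬∃ n : ℤ, y = n) :
    1 - e (x * τ + y) ≠ 0 := by
  rw [sub_ne_zero, ne_comm, Ne, e_mul_add_eq_one_iff hτ]
  exact fun ⟨hx, hy⟩ => h hx hy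

/-- `log ‖g_{(x,y)}(τ)‖`, for all real `x, y`. -/
noncomputable def logNorm (x y : ℝ) (τ : ℂ) : ℝ :=
  (x ^ 2 - x + 1 / 6) / 2 * (-2 * π * τ.im) + logNormTheta (e τ) (e (x * τ + y))

lemma norm_e_lt_one (hτ : 0 < τ.im) : ‖e τ‖ < 1 := by
  rw [norm_e, Real.exp_lt_one_iff]
  nlinarith [Real.pi_pos]

lemma e_pow_succ_mul (x y : ℝ) (τ : ℂ) (n : ℕ) :
    e τ ^ (n + 1) * e (x * τ + y) = e ((x + (n + 1) : ℝ) * τ + y) := by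
  rw [e_pow, ← e_add]; push_cast; ring_nf

lemma e_pow_succ_mul_inv (x y : ℝ) (τ : ℂ) (n : ℕ) :
    e τ ^ (n + 1) * (e (x * τ + y))⁻¹ = e ((n + 1 - x : ℝ) * τ + (-y : ℝ)) := by
  rw [e_pow, ← e_neg, ← e_add]; push_cast; ring_nf

lemma norm_siegelFunction {v : ℚ × ℚ} (hτ : 0 < τ.im)
    (hv : ¬∃ m n : ℤ, v.1 = (m : ℚ) ∧ v.2 = (n : ℚ)) :
    ‖siegelFunction v τ‖ = Real.exp (logNorm v.1 v.2 τ) := by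
  have hxy : ∀ m n : ℤ, (v.1 : ℝ) = m → (v.2 : ℝ) ≠ n := fun m n hm hn =>
    hv ⟨m, n, by exact_mod_cast hm, by exact_mod_cast hn⟩
  have h0 : 1 - e ((v.1 : ℝ) * τ + (v.2 : ℝ)) ≠ 0 :=
    one_sub_e_ne_zero hτ fun hx ⟨n, hn⟩ => hxy 0 n (by simpa using hx) hn
  have h1 : ∀ n : ℕ, 1 - e τ ^ (n + 1) * e ((v.1 : ℝ) * τ + (v.2 : ℝ)) ≠ 0 := fun n => by
    rw [e_pow_succ_mul]
    exact one_sub_e_ne_zero hτ fun hx ⟨k, hk⟩ =>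
      hxy (-(n + 1)) k (by push_cast; linarith) hk
  have h2 : ∀ n : ℕ, 1 - e τ ^ (n + 1) * (e ((v.1 : ℝ) * τ + (v.2 : ℝ)))⁻¹ ≠ 0 := fun n => by
    rw [e_pow_succ_mul_inv]
    exact one_sub_e_ne_zero hτ fun hx ⟨k, hk⟩ =>
      hxy (n + 1) (-k) (by push_cast; linarith) (by push_cast; linarith)
  have hunit : ‖-exp (π * I * v.2 * (v.1 - 1))‖ = 1 := by
    rw [norm_neg, Complex.norm_exp]; simp
  have hpow : ‖exp (2 * π * I * ((1 / 2 : ℂ) * ((v.1 : ℂ) ^ 2 - v.1 + 1 / 6)) * τ)‖ =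
      Real.exp (((v.1 : ℝ) ^ 2 - v.1 + 1 / 6) / 2 * (-2 * π * τ.im)) := by
    have harg : 2 * π * I * ((1 / 2 : ℂ) * ((v.1 : ℂ) ^ 2 - v.1 + 1 / 6)) * τ =
        2 * π * I * ((((v.1 : ℝ) ^ 2 - v.1 + 1 / 6) / 2 : ℝ) * τ + (0 : ℝ)) := by
      push_cast; ring
    rw [harg]
    exact (norm_e _).trans (by rw [im_ofReal_mul_add]; ring_nf)
  have htheta := norm_one_sub_mul_tprod (norm_e_lt_one hτ) h0 h1 h2
  rw [siegelFunction, mul_assoc, norm_mul, norm_mul, hunit, hpow, one_mul, logNorm, Real.exp_add]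
  simp only [e, Complex.ofReal_ratCast] at htheta ⊢
  rw [htheta]

lemma logNorm_add_one (hτ : 0 < τ.im) (x y : ℝ) : logNorm (x + 1) y τ = logNorm x y τ := by
  have hw : e ((x + 1 : ℝ) * τ + y) = e τ * e (x * τ + y) := by
    rw [← e_add]; push_cast; ring_nf
  rw [logNorm, logNorm, hw, logNormTheta_mul_left (e_ne_zero τ) (norm_e_lt_one hτ),
    log_norm_e_mul_add]
  ring

lemma logNorm_neg (x y : ℝ) (τ : ℂ) : logNorm (-x) (-y) τ = logNorm x y τ := by
  have hw : e ((-x : ℝ) * τ + (-y : ℝ)) = (e (x * τ + y))⁻¹ := by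
    rw [← e_neg]; push_cast; ring_nf
  rw [logNorm, logNorm, hw, logNormTheta_inv, log_norm_e_mul_add]
  ring

lemma logNorm_add_intCast (hτ : 0 < τ.im) (x y : ℝ) (k : ℤ) :
    logNorm (x + k) y τ = logNorm x y τ := by
  induction k using Int.induction_on with
  | zero => simp
  | succ k ih =>
    rw [← ih, ← logNorm_add_one hτ (x + (k : ℤ))]
    congr 1; push_cast; ring
  | pred k ih =>
    rw [← ih, ← logNorm_add_one hτ (x + (-(k : ℤ) - 1 : ℤ))]
    congr 1; push_cast; ring

lemma exists_logNorm_eq_abs_sub_round (hτ : 0 < τ.im) (x y : ℝ) :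
    ∃ y' : ℝ, logNorm x y τ = logNorm |x - round x| y' τ := by
  rcases le_or_gt 0 (x - round x) with h | h
  · refine ⟨y, ?_⟩
    rw [abs_of_nonneg h, sub_eq_add_neg, ← Int.cast_neg, logNorm_add_intCast hτ]
  · refine ⟨-y, ?_⟩
    rw [abs_of_neg h, neg_sub, sub_eq_neg_add, logNorm_add_intCast hτ, logNorm_neg]

lemma exp_neg_pi_mul_le_one_div_ten {t : ℝ} (ht : √3 / 2 ≤ t) : Real.exp (-π * t) ≤ 1 / 10 := by
  have hsqrt : 5 / 3 ≤ √3 := Real.le_sqrt_of_sq_le (by norm_num)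
  have hpt : 5 / 2 ≤ π * t := by nlinarith [Real.pi_gt_three]
  have he : 10 ≤ Real.exp (5 / 2) := by
    have h1 := Real.exp_one_gt_d9
    have h2 : 3 / 2 ≤ Real.exp (1 / 2) := by linarith [Real.add_one_le_exp (1 / 2)]
    rw [show (5 / 2 : ℝ) = 1 + 1 + 1 / 2 by norm_num, Real.exp_add, Real.exp_add]
    nlinarith
  calc Real.exp (-π * t) ≤ Real.exp (-(5 / 2)) := Real.exp_le_exp.2 (by linarith)
    _ = (Real.exp (5 / 2))⁻¹ := Real.exp_neg _
    _ ≤ 1 / 10 := by rw [one_div]; exact inv_anti₀ (by norm_num) he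

lemma logNorm_ge (hx0 : 0 ≤ x) (hx : x ≤ 1 / 2) (hτ : √3 / 2 ≤ τ.im) (y : ℝ) :
    -2 * π * τ.im / 12 - 4 / 9 + Real.log ‖1 - e (x * τ + y)‖ ≤ logNorm x y τ := by
  set s := Real.exp (-π * τ.im)
  have hs : s ≤ 1 / 10 := exp_neg_pi_mul_le_one_div_ten hτ
  have him : 0 < τ.im := lt_of_lt_of_le (by positivity) hτ
  have hπ := Real.pi_pos
  have hq : ‖e τ‖ ≤ s := by
    rw [norm_e]; exact Real.exp_le_exp.2 (by nlinarith)
  have hw : ‖e (x * τ + y)‖ ≤ 1 := by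
    rw [norm_e, im_ofReal_mul_add, Real.exp_le_one_iff]; nlinarith [mul_nonneg hx0 him.le]
  have hqw : ‖e τ‖ ≤ s * ‖e (x * τ + y)‖ := by
    rw [norm_e, norm_e, im_ofReal_mul_add, ← Real.exp_add]
    exact Real.exp_le_exp.2 (by nlinarith [mul_nonneg (by linarith : 0 ≤ 1 / 2 - x) him.le])
  have htheta := logNormTheta_ge (by linarith) hw hq hqw
  have hs9 : 4 * s / (1 - s) ≤ 4 / 9 := by
    rw [div_le_div_iff₀ (by linarith) (by norm_num)]; linarith
  have hB2 : -2 * π * τ.im / 12 ≤ (x ^ 2 - x + 1 / 6) / 2 * (-2 * π * τ.im) := by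
    nlinarith [mul_nonneg (mul_nonneg hx0 (by linarith : 0 ≤ 1 - x)) (mul_pos hπ him).le]
  rw [logNorm]
  linarith

lemma two_mul_mul_one_sub_exp_le (hx0 : 0 ≤ x) (hx : x ≤ 1 / 2) (a : ℝ) :
    2 * x * (1 - Real.exp a) ≤ 1 - Real.exp (2 * x * a) := by
  have h := convexOn_exp.2 (Set.mem_univ 0) (Set.mem_univ a) (by linarith : 0 ≤ 1 - 2 * x)
    (by linarith : 0 ≤ 2 * x) (by ring)
  simp only [smul_eq_mul, mul_zero, zero_add, Real.exp_zero, mul_one] at h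
  linarith

lemma nine_div_le_norm_one_sub_e {N : ℕ} (hx : 1 / N ≤ x) (hx' : x ≤ 1 / 2)
    (hτ : √3 / 2 ≤ τ.im) (y : ℝ) : 9 / (5 * N) ≤ ‖1 - e (x * τ + y)‖ := by
  have hx0 : 0 ≤ x := le_trans (by positivity) hx
  have hs := exp_neg_pi_mul_le_one_div_ten hτ
  have hw : ‖e (x * τ + y)‖ = Real.exp (2 * x * (-π * τ.im)) := by
    rw [norm_e, im_ofReal_mul_add]; ring_nf
  calc (9 : ℝ) / (5 * N) = 2 * (1 / N) * (1 - 1 / 10) := by ring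
    _ ≤ 2 * x * (1 - Real.exp (-π * τ.im)) := by gcongr
    _ ≤ 1 - ‖e (x * τ + y)‖ := hw ▸ two_mul_mul_one_sub_exp_le hx0 hx' _
    _ ≤ ‖1 - e (x * τ + y)‖ := by simpa using norm_sub_norm_le (1 : ℂ) (e (x * τ + y))

lemma four_mul_abs_sub_round_le_norm_one_sub_e (y : ℝ) : 4 * |y - round y| ≤ ‖1 - e y‖ := by
  set t := y - round y
  have ht : |π * t| ≤ π / 2 := by
    rw [abs_mul, abs_of_pos Real.pi_pos]
    nlinarith [abs_sub_round y, Real.pi_pos]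
  have hey : e y = exp (I * (2 * π * t : ℝ)) := by
    rw [show (y : ℂ) = (t : ℝ) + ((round y : ℤ) : ℂ) by push_cast [t]; ring, e_add_intCast, e]
    push_cast; ring_nf
  rw [hey, norm_sub_rev, Complex.norm_exp_I_mul_ofReal_sub_one, norm_mul,
    show 2 * π * t / 2 = π * t by ring, Real.norm_eq_abs, Real.norm_eq_abs,
    Real.abs_sin_eq_sin_abs_of_abs_le_pi (by linarith [Real.pi_pos])]
  have hjordan : 2 * |t| ≤ Real.sin (π * |t|) := by
    have h := Real.mul_le_sin (abs_nonneg _) ht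
    rwa [abs_mul, abs_of_pos Real.pi_pos, ← mul_assoc, div_mul_cancel₀ _ Real.pi_ne_zero] at h
  rw [abs_mul, abs_of_pos Real.pi_pos, abs_two]
  linarith

lemma nine_div_le_norm_one_sub_e_of_le_abs_sub_round {N : ℕ} (hy : 1 / N ≤ |y - round y|)
    (τ : ℂ) : 9 / (5 * N) ≤ ‖1 - e ((0 : ℝ) * τ + y)‖ := by
  calc (9 : ℝ) / (5 * N) = 9 / 5 * (1 / N) := by ring
    _ ≤ 4 * (1 / N) := by gcongr; norm_num
    _ ≤ 4 * |y - round y| := by gcongr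
    _ ≤ ‖1 - e ((0 : ℝ) * τ + y)‖ := by simpa using four_mul_abs_sub_round_le_norm_one_sub_e y

lemma eq_round_or_inv_le_abs_sub_round {N : ℕ} (hN : 0 < N) (hx : ∃ a : ℤ, x = a / N) :
    x = round x ∨ 1 / N ≤ |x - round x| := by
  obtain ⟨a, rfl⟩ := hx
  have hN' : (0 : ℝ) < N := by exact_mod_cast hN
  have hsub : (a : ℝ) / N - round ((a : ℝ) / N) =
      ((a - N * round ((a : ℝ) / N) : ℤ) : ℝ) / N := by
    push_cast; field_simp
  rcases eq_or_ne (a - N * round ((a : ℝ) / N)) 0 with h | h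
  · left; rw [← sub_eq_zero, hsub, h]; simp
  · right
    rw [hsub, abs_div, abs_of_pos hN']
    gcongr
    exact_mod_cast Int.one_le_abs h

lemma lt_exp_logNorm {N : ℕ} (hN : 0 < N) (hx0 : 0 ≤ x) (hx : x ≤ 1 / 2) (hτ : √3 / 2 ≤ τ.im)
    (hfront : 9 / (5 * N) ≤ ‖1 - e (x * τ + y)‖) :
    0.76 * ‖e τ‖ ^ (1 / 12 : ℝ) / N < Real.exp (logNorm x y τ) := by
  have hN' : (0 : ℝ) < N := by exact_mod_cast hN
  have hpos : 0 < ‖1 - e (x * τ + y)‖ := lt_of_lt_of_le (by positivity) hfront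
  have hq : ‖e τ‖ ^ (1 / 12 : ℝ) = Real.exp (-2 * π * τ.im / 12) := by
    rw [Real.rpow_def_of_pos (norm_pos_iff.2 (e_ne_zero τ)), norm_e, Real.log_exp]; ring_nf
  have h49 : 5 / 9 ≤ Real.exp (-4 / 9) := by linarith [Real.add_one_le_exp (-4 / 9)]
  set A := -2 * π * τ.im / 12
  calc 0.76 * ‖e τ‖ ^ (1 / 12 : ℝ) / N < Real.exp A / N := by
        rw [hq]; gcongr; linarith [Real.exp_pos A]
    _ = Real.exp A * (5 / 9) * (9 / (5 * N)) := by field_simp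
    _ ≤ Real.exp A * Real.exp (-4 / 9) * ‖1 - e (x * τ + y)‖ := by gcongr
    _ = Real.exp (A - 4 / 9 + Real.log ‖1 - e (x * τ + y)‖) := by
        rw [Real.exp_add, Real.exp_log hpos, ← Real.exp_add]; ring_nf
    _ ≤ Real.exp (logNorm x y τ) := Real.exp_le_exp.2 (logNorm_ge hx0 hx hτ y)

end Siegel

open Siegel

theorem siegel_abs_gt_general (N : ℕ) (hN : 2 ≤ N) (v : ℚ × ℚ)
    (hvN : ∃ a b : ℤ, v.1 = (a : ℚ) / N ∧ v.2 = (b : ℚ) / N)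
    (hv : ¬∃ m n : ℤ, v.1 = (m : ℚ) ∧ v.2 = (n : ℚ))
    (τ : ℂ)
    (hq : ‖Complex.exp (2 * (Real.pi : ℂ) * Complex.I * τ)‖ ≤
      Real.exp (-Real.pi * Real.sqrt 3)) :
    ‖siegelFunction v τ‖ >
      0.76 * ‖Complex.exp (2 * (Real.pi : ℂ) * Complex.I * τ)‖ ^ ((1 : ℝ) / 12) / N := by
  obtain ⟨a, b, ha, hb⟩ := hvN
  have hN0 : 0 < N := by omega
  have hτ : √3 / 2 ≤ τ.im := by
    change ‖e τ‖ ≤ _ at hq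
    rw [norm_e, Real.exp_le_exp] at hq
    nlinarith [Real.pi_pos]
  have him : 0 < τ.im := lt_of_lt_of_le (by positivity) hτ
  change 0.76 * ‖e τ‖ ^ (1 / 12 : ℝ) / N < ‖siegelFunction v τ‖
  rw [norm_siegelFunction him hv]
  rcases eq_round_or_inv_le_abs_sub_round hN0 (x := v.1) ⟨a, by simp [ha]⟩ with hx | hx
  · have hy := (eq_round_or_inv_le_abs_sub_round hN0 (x := v.2) ⟨b, by simp [hb]⟩).resolve_left
      fun hy => hv ⟨_, _, by exact_mod_cast hx, by exact_mod_cast hy⟩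
    rw [hx, ← zero_add ((round (v.1 : ℝ) : ℤ) : ℝ), logNorm_add_intCast him]
    exact lt_exp_logNorm hN0 le_rfl (by norm_num) hτ
      (nine_div_le_norm_one_sub_e_of_le_abs_sub_round hy τ)
  · obtain ⟨y, hy⟩ := exists_logNorm_eq_abs_sub_round him v.1 v.2
    rw [hy]
    exact lt_exp_logNorm hN0 (abs_nonneg _) (abs_sub_round _) hτ
      (nine_div_le_norm_one_sub_e hx (abs_sub_round _) hτ y)

theorem siegel_abs_gt (N : ℕ) (hN : 2 ≤ N) (v : ℚ × ℚ)
    (hvN : ∃ a b : ℤ, v.1 = (a : ℚ) / N ∧ v.2 = (b : ℚ) / N)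
    (hv : ¬∃ m n : ℤ, v.1 = (m : ℚ) ∧ v.2 = (n : ℚ))
    (τ : ℂ) (hτ : 0 < τ.im)
    (hq : ‖Complex.exp (2 * (Real.pi : ℂ) * Complex.I * τ)‖ ≤
      Real.exp (-Real.pi * Real.sqrt 3)) :
    ‖siegelFunction v τ‖ >
      0.76 * ‖Complex.exp (2 * (Real.pi : ℂ) * Complex.I * τ)‖ ^ ((1 : ℝ) / 12) / N :=
  siegel_abs_gt_general N hN v hvN hv τ hq
end

section
/- For every real number s with 0 < s ≤ e^{−π√3}, one has ∏_{n=1}^∞ (1 + s^{n−1/2})² ≤ e^{2√s/(1−s)} and 2·e^{2√s/(1−s)} < 2.29. -/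
/-!
Writing `s ^ (n + 1/2) = √s * s ^ n` and using `1 + x ≤ exp x` factor by factor, the product is
bounded by the exponential of twice a geometric series, `2√s / (1 - s)`. The numerical claim
follows from `exp (-π√3) < 1/230`, which makes that exponent smaller than `0.1326`.
-/

open Real

namespace Real

theorem tprod_le_exp_tsum {ι : Type*} {f g : ι → ℝ} (hf : ∀ i, 0 ≤ f i)
    (hfg : ∀ i, f i ≤ exp (g i)) (hg : ∀ i, 0 ≤ g i) (hg_sum : Summable g) :
    ∏' i, f i ≤ exp (∑' i, g i) := by
  refine tprod_le_of_prod_le' (one_le_exp (tsum_nonneg hg)) fun t ↦ ?_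
  calc ∏ i ∈ t, f i ≤ ∏ i ∈ t, exp (g i) := Finset.prod_le_prod (fun i _ ↦ hf i) fun i _ ↦ hfg i
    _ = exp (∑ i ∈ t, g i) := (exp_sum t g).symm
    _ ≤ exp (∑' i, g i) := exp_le_exp.2 (hg_sum.sum_le_tsum t fun i _ ↦ hg i)

theorem one_add_sq_le_exp_two_mul {x : ℝ} (hx : 0 ≤ x) : (1 + x) ^ 2 ≤ exp (2 * x) := by
  calc (1 + x) ^ 2 ≤ exp x ^ 2 := by gcongr; linarith [add_one_le_exp x]
    _ = exp (2 * x) := by rw [← exp_nat_mul]; norm_num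

theorem rpow_natCast_add_half {s : ℝ} (hs : 0 < s) (n : ℕ) :
    s ^ ((n : ℝ) + 1 / 2) = √s * s ^ n := by
  rw [rpow_add hs, rpow_natCast, sqrt_eq_rpow, mul_comm]

theorem tprod_one_add_rpow_add_half_sq_le {s : ℝ} (hs₀ : 0 < s) (hs₁ : s < 1) :
    ∏' n : ℕ, (1 + s ^ ((n : ℝ) + 1 / 2)) ^ 2 ≤ exp (2 * √s / (1 - s)) := by
  have hterm : ∀ n : ℕ, 0 ≤ √s * s ^ n := fun n ↦ by positivity
  have hgeom : Summable fun n : ℕ ↦ 2 * (√s * s ^ n) :=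
    ((summable_geometric_of_lt_one hs₀.le hs₁).mul_left √s).mul_left 2
  calc ∏' n : ℕ, (1 + s ^ ((n : ℝ) + 1 / 2)) ^ 2
      = ∏' n : ℕ, (1 + √s * s ^ n) ^ 2 := by simp_rw [rpow_natCast_add_half hs₀]
    _ ≤ exp (∑' n : ℕ, 2 * (√s * s ^ n)) :=
      tprod_le_exp_tsum (fun n ↦ by positivity) (fun n ↦ one_add_sq_le_exp_two_mul (hterm n))
        (fun n ↦ by linarith [hterm n]) hgeom
    _ = exp (2 * √s / (1 - s)) := by
      rw [tsum_mul_left, tsum_mul_left, tsum_geometric_of_lt_one hs₀.le hs₁, div_eq_mul_inv,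
        mul_assoc]

theorem exp_neg_pi_mul_sqrt_three_lt : exp (-π * √3) < 1 / 230 := by
  have hsqrt3 : (1.732 : ℝ) < √3 := by
    rw [lt_sqrt (by norm_num)]; norm_num
  have hexponent : (5.441 : ℝ) < π * √3 :=
    calc (5.441 : ℝ) < 3.141592 * 1.732 := by norm_num
      _ < π * √3 := mul_lt_mul pi_gt_d6 hsqrt3.le (by norm_num) pi_pos.le
  have htaylor : (1.5525 : ℝ) ≤ exp 0.441 := by
    have := sum_le_exp_of_nonneg (x := 0.441) (by norm_num) 4
    norm_num [Finset.sum_range_succ, Nat.factorial] at this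
    linarith
  have h230 : (230 : ℝ) < exp 5.441 :=
    calc (230 : ℝ) < 2.7182818283 ^ 5 * 1.5525 := by norm_num
      _ ≤ exp 1 ^ 5 * exp 0.441 := by gcongr; exact exp_one_gt_d9.le
      _ = exp 5.441 := by rw [← exp_nat_mul, ← exp_add]; norm_num
  rw [neg_mul, exp_neg, inv_lt_comm₀ (exp_pos _) (by norm_num)]
  calc (1 / 230 : ℝ)⁻¹ = 230 := by norm_num
    _ < exp 5.441 := h230
    _ < exp (π * √3) := exp_lt_exp.2 hexponent

theorem exp_two_mul_sqrt_div_one_sub_lt {s : ℝ} (hs₀ : 0 < s) (hs : s < 1 / 230) :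
    exp (2 * √s / (1 - s)) < 1.1425 := by
  have hsqrt : √s < 0.066 := by
    rw [sqrt_lt' (by norm_num)]; linarith
  have hexponent : 2 * √s / (1 - s) < 0.1326 := by
    rw [div_lt_iff₀ (by linarith)]
    nlinarith [sqrt_nonneg s]
  have htaylor : exp 0.1326 ≤ 1.1425 := by
    have := exp_bound' (x := 0.1326) (by norm_num) (by norm_num) (n := 3) (by norm_num)
    norm_num [Finset.sum_range_succ, Nat.factorial] at this
    linarith
  exact (exp_lt_exp.2 hexponent).trans_le htaylor

end Real

theorem prod_one_add_le (s : ℝ) (hs : 0 < s) (hs' : s ≤ Real.exp (-Real.pi * Real.sqrt 3)) :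
    (∏' n : ℕ, (1 + s ^ ((n : ℝ) + 1 / 2)) ^ 2) ≤ Real.exp (2 * Real.sqrt s / (1 - s)) ∧
    2 * Real.exp (2 * Real.sqrt s / (1 - s)) < 2.29 := by
  have hs230 : s < 1 / 230 := hs'.trans_lt exp_neg_pi_mul_sqrt_three_lt
  refine ⟨tprod_one_add_rpow_add_half_sq_le hs (by linarith), ?_⟩
  linarith [exp_two_mul_sqrt_div_one_sub_lt hs hs230]
end
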